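/- Let (A, p, 0, ½, 1) be a mobi algebra with derived operations ā = p(1,a,0), a·b = p(0,a,b), and a⊕b = p(a,½,b). Then for all a, b, c ∈ A: ½ · p(a,b,c) = (b̄ · a) ⊕ (b · c). -/

import Mathlib

/-- A mobi algebra: a set with a ternary operation `p` and constants `e0`, `half`, `e1`. -/
structure MobiAlgebra (A : Type*) where
  p : A → A → A → A
  e0 : A
  half : A
  e1 : A
  A1 : p e1 half e0 = half
  A2 : ∀ a, p e0 a e1 = a
  A3 : ∀ a b, p a b a = a
  A4 : ∀ a b, p a e0 b = a
  A5 : ∀ a b, p a e1 b = b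
  A6 : ∀ a a' b, p a half b = p a' half b → a = a'
  A7 : ∀ a b c1 c2 c3, p a (p c1 c2 c3) b = p (p a c1 b) c2 (p a c3 b)
  A8 : ∀ a1 a2 b1 b2 c,
    p (p a1 c b1) half (p a2 c b2) = p (p a1 half a2) c (p b1 half b2)

namespace MobiAlgebra

variable {A : Type*} (M : MobiAlgebra A)

theorem p_half_comm (x y : A) : M.p x M.half y = M.p y M.half x := by
  -- Expand `½ = p(1,½,0)` and distribute with (A7).
  conv_lhs => rw [← M.A1]
  rw [M.A7, M.A5, M.A4]

theorem p_e0_p_e1_e0 (a b : A) : M.p M.e0 (M.p M.e1 b M.e0) a = M.p a b M.e0 := by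
  rw [M.A7, M.A5, M.A4]

end MobiAlgebra

/-- Property (p_to_ring): in a mobi algebra, with ā = p(1,a,0),
a·b = p(0,a,b) and a⊕b = p(a,½,b), one has ½·p(a,b,c) = (b̄·a) ⊕ (b·c). -/
theorem mobi_half_mul_p {A : Type*} (M : MobiAlgebra A) (a b c : A) :
    M.p M.e0 M.half (M.p a b c) =
      M.p (M.p M.e0 (M.p M.e1 b M.e0) a) M.half (M.p M.e0 b c) := by
  -- Writing `0 = p(0,b,0)`, both sides become instances of the medial law (A8).
  calc M.p M.e0 M.half (M.p a b c)
      = M.p (M.p M.e0 b M.e0) M.half (M.p a b c) := by rw [M.A3]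
    _ = M.p (M.p M.e0 M.half a) b (M.p M.e0 M.half c) := M.A8 _ _ _ _ _
    _ = M.p (M.p a M.half M.e0) b (M.p M.e0 M.half c) := by rw [M.p_half_comm]
    _ = M.p (M.p a b M.e0) M.half (M.p M.e0 b c) := (M.A8 _ _ _ _ _).symm
    _ = M.p (M.p M.e0 (M.p M.e1 b M.e0) a) M.half (M.p M.e0 b c) := by
      rw [M.p_e0_p_e1_e0]
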